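/- arXiv:0808.0785 — 4 statements merged into one kernel-verified Lean document; each statement's English description precedes it below -/
import Mathlib

section
/- Let K be a field of characteristic zero and t ≥ 1. The ℤ-subalgebra of K[y₁,…,y_t] generated by all elements binom(H − z, n), where H = a₁y₁ + ⋯ + a_t y_t ranges over the ℤ-linear combinations of the variables (a₁,…,a_t ∈ ℤ), z ∈ ℤ and n ∈ ℕ, coincides with the ring Int_ℤ(K[y₁,…,y_t]) of integer-valued polynomials. -/
/-!
A generator `binom(H - z, n)` takes the value `Ring.choose (H(x) - z) n ∈ ℤ` at every integer
point `x`. Conversely, the products `∏ᵢ binom(yᵢ, νᵢ)` span `K[y]` over `K`, because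
`binom(y, n) · y = (n + 1) binom(y, n + 1) + n binom(y, n)`. Their values at `μ ∈ ℕᵗ` are
`∏ᵢ C(μᵢ, νᵢ)`, which is unitriangular for the componentwise order on `ℕᵗ`; so an integer-valued
polynomial has integer coordinates in this spanning family.
-/

/-- The "binomial coefficient" polynomial `binom(p, n) = (1/n!) · ∏_{j=0}^{n-1} (p - j)`. -/
noncomputable def binomPoly {K : Type*} [Field K] {t : ℕ}
    (p : MvPolynomial (Fin t) K) (n : ℕ) : MvPolynomial (Fin t) K :=
  MvPolynomial.C ((n.factorial : K)⁻¹) *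
    ∏ j ∈ Finset.range n, (p - MvPolynomial.C (j : K))

open MvPolynomial Finset

theorem prod_range_sub_eq_factorial_nsmul_choose {R : Type*} [CommRing R] [BinomialRing R]
    (r : R) (n : ℕ) : ∏ j ∈ range n, (r - j) = n.factorial • Ring.choose r n := by
  rw [← descPochhammer_eval_eq_prod_range, ← Ring.descPochhammer_eq_factorial_smul_choose,
    ← Polynomial.aeval_eq_smeval, Polynomial.aeval_def, ← Polynomial.eval_map,
    descPochhammer_map]

theorem Finsupp.mem_of_forall_sum_mul_choose_mem {σ R : Type*} [Fintype σ] [CommRing R]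
    (S : Subring R) (l : (σ →₀ ℕ) →₀ R)
    (hl : ∀ μ : σ →₀ ℕ, (l.sum fun ν a => a * ∏ i, ((μ i).choose (ν i) : R)) ∈ S)
    (ν : σ →₀ ℕ) : l ν ∈ S := by
  induction ν using WellFoundedLT.induction with
  | _ μ ih =>
  by_cases hμ : μ ∈ l.support
  swap
  · rw [Finsupp.notMem_support_iff.mp hμ]
    exact zero_mem S
  have hsum := hl μ
  rw [Finsupp.sum, ← Finset.add_sum_erase _ _ hμ] at hsum
  simp only [Nat.choose_self, Nat.cast_one, prod_const_one, mul_one] at hsum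
  have hrest : ∑ ν ∈ l.support.erase μ, l ν * ∏ i, ((μ i).choose (ν i) : R) ∈ S := by
    refine S.sum_mem fun ν hν => ?_
    by_cases hle : ν ≤ μ
    · exact S.mul_mem (ih ν (lt_of_le_of_ne hle (ne_of_mem_erase hν)))
        (S.prod_mem fun i _ => natCast_mem S _)
    · obtain ⟨i, hi⟩ : ∃ i, μ i < ν i := by simpa [Finsupp.le_def] using hle
      rw [prod_eq_zero (mem_univ i) (by simp [Nat.choose_eq_zero_of_lt hi]), mul_zero]
      exact zero_mem S
  simpa using S.sub_mem hsum hrest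

section

variable {K : Type*} [Field K] [CharZero K] {t : ℕ}

theorem binomPoly_eq_choose (p : MvPolynomial (Fin t) K) (n : ℕ) :
    binomPoly p n = Ring.choose p n := by
  have hcast : ∏ j ∈ range n, (p - C (j : K)) = ∏ j ∈ range n, (p - j) := by
    simp only [map_natCast]
  rw [binomPoly, hcast, prod_range_sub_eq_factorial_nsmul_choose, nsmul_eq_mul, ← mul_assoc,
    ← map_natCast C, ← map_mul, inv_mul_cancel₀ (by exact_mod_cast n.factorial_ne_zero),
    map_one, one_mul]

theorem eval_binomPoly (x : Fin t → K) (p : MvPolynomial (Fin t) K) (n : ℕ) :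
    eval x (binomPoly p n) = Ring.choose (eval x p) n := by
  rw [binomPoly_eq_choose, Ring.map_choose]

theorem binomPoly_mul_self (p : MvPolynomial (Fin t) K) (n : ℕ) :
    binomPoly p n * p =
      ((n + 1 : ℕ) : K) • binomPoly p (n + 1) + (n : K) • binomPoly p n := by
  have hsucc : ((n + 1 : ℕ) : K) • binomPoly p (n + 1) = binomPoly p n * (p - C (n : K)) := by
    have : ((n + 1 : ℕ) : K) ≠ 0 := by exact_mod_cast n.succ_ne_zero
    rw [binomPoly, binomPoly, prod_range_succ, Nat.factorial_succ, Nat.cast_mul, mul_inv,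
      smul_eq_C_mul, ← mul_assoc, ← mul_assoc, ← map_mul, mul_inv_cancel_left₀ this]
  rw [hsucc, smul_eq_C_mul]
  ring

end

section

variable (K : Type*) [Field K] {t : ℕ}

noncomputable def multiBinom (ν : Fin t →₀ ℕ) : MvPolynomial (Fin t) K :=
  ∏ i, binomPoly (X i) (ν i)

variable {K}

theorem multiBinom_zero : multiBinom K (0 : Fin t →₀ ℕ) = 1 := by
  simp [multiBinom, binomPoly]

variable [CharZero K]

theorem multiBinom_mul_X (ν : Fin t →₀ ℕ) (i : Fin t) :
    multiBinom K ν * X i = ((ν i + 1 : ℕ) : K) • multiBinom K (ν + Finsupp.single i 1) +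
      (ν i : K) • multiBinom K ν := by
  have hrest :
      ∏ j ∈ univ.erase i, binomPoly (X j) ((ν + Finsupp.single i 1 : Fin t →₀ ℕ) j) =
      ∏ j ∈ univ.erase i, binomPoly (K := K) (X j) (ν j) :=
    prod_congr rfl fun j hj => by
      rw [Finsupp.add_apply, Finsupp.single_eq_of_ne (ne_of_mem_erase hj), add_zero]
  have hsplit (μ : Fin t →₀ ℕ) :
      multiBinom K μ = binomPoly (X i) (μ i) * ∏ j ∈ univ.erase i, binomPoly (X j) (μ j) :=
    (mul_prod_erase univ _ (mem_univ i)).symm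
  rw [hsplit ν, hsplit (ν + _), hrest, Finsupp.add_apply, Finsupp.single_eq_same, mul_right_comm,
    binomPoly_mul_self, add_mul, smul_mul_assoc, smul_mul_assoc]

theorem span_multiBinom : Submodule.span K (Set.range (multiBinom K (t := t))) = ⊤ := by
  set M := Submodule.span K (Set.range (multiBinom K (t := t)))
  have hX (i : Fin t) : M ≤ M.comap (LinearMap.mulRight K (X i)) := by
    refine Submodule.span_le.mpr ?_
    rintro _ ⟨ν, rfl⟩
    change multiBinom K ν * X i ∈ M
    rw [multiBinom_mul_X]
    exact add_mem (M.smul_mem _ (Submodule.subset_span ⟨_, rfl⟩))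
      (M.smul_mem _ (Submodule.subset_span ⟨_, rfl⟩))
  refine Submodule.eq_top_iff'.mpr fun f => ?_
  induction f using MvPolynomial.induction_on with
  | C a =>
    rw [C_eq_smul_one, ← multiBinom_zero]
    exact M.smul_mem _ (Submodule.subset_span ⟨_, rfl⟩)
  | add f g hf hg => exact add_mem hf hg
  | mul_X f i hf => exact hX i hf

theorem eval_natCast_multiBinom (μ ν : Fin t →₀ ℕ) :
    eval (fun i => (μ i : K)) (multiBinom K ν) = ∏ i, ((μ i).choose (ν i) : K) := by
  simp only [multiBinom, map_prod, eval_binomPoly, eval_X, Ring.choose_natCast]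

end

noncomputable def integerValued (K σ : Type*) [CommRing K] : Subalgebra ℤ (MvPolynomial σ K) :=
  ⨅ z : σ → ℤ,
    (⊥ : Subalgebra ℤ K).comap ((aeval fun i => (z i : K)).restrictScalars ℤ)

theorem mem_integerValued {K σ : Type*} [CommRing K] {f : MvPolynomial σ K} :
    f ∈ integerValued K σ ↔
      ∀ z : σ → ℤ, ∃ m : ℤ, eval (fun i => (z i : K)) f = m := by
  simp [integerValued, Algebra.mem_iInf, Algebra.mem_bot, eq_comm]

section

variable {K : Type*} [Field K] [CharZero K] {t : ℕ}

theorem binomPoly_linear_mem_integerValued (a : Fin t → ℤ) (c : ℤ) (n : ℕ) :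
    binomPoly ((∑ i, a i • X i) - C (c : K)) n ∈ integerValued K (Fin t) := by
  refine mem_integerValued.mpr fun z => ⟨Ring.choose (∑ i, a i * z i - c) n, ?_⟩
  have heval : eval (fun i => (z i : K)) ((∑ i, a i • X i) - C (c : K)) =
      ((∑ i, a i * z i - c : ℤ) : K) := by
    simp
  rw [eval_binomPoly, heval]
  exact (Ring.map_choose (Int.castRingHom K) _ n).symm

theorem mem_span_multiBinom_of_mem_integerValued {f : MvPolynomial (Fin t) K}
    (hf : f ∈ integerValued K (Fin t)) :
    f ∈ Submodule.span ℤ (Set.range (multiBinom K (t := t))) := by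
  have hfK : f ∈ Submodule.span K (Set.range (multiBinom K (t := t))) := by
    simp [span_multiBinom]
  obtain ⟨l, rfl⟩ := Finsupp.mem_span_range_iff_exists_finsupp.mp hfK
  have hl (ν : Fin t →₀ ℕ) : l ν ∈ (⊥ : Subring K) := by
    refine Finsupp.mem_of_forall_sum_mul_choose_mem ⊥ l (fun μ => ?_) ν
    obtain ⟨m, hm⟩ := mem_integerValued.mp hf fun i => μ i
    refine Subring.mem_bot.mpr ⟨m, ?_⟩
    simp only [Int.cast_natCast, Finsupp.sum, map_sum, smul_eval, eval_natCast_multiBinom] at hm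
    exact hm.symm
  refine Submodule.sum_mem _ fun ν _ => ?_
  obtain ⟨m, hm⟩ := Subring.mem_bot.mp (hl ν)
  simp only [← hm, Int.cast_smul_eq_zsmul]
  exact Submodule.smul_mem _ m (Submodule.subset_span ⟨ν, rfl⟩)

end

theorem adjoin_binomials_eq_integer_valued_polynomials_general
    (K : Type*) [Field K] [CharZero K] (t : ℕ) :
    (Algebra.adjoin ℤ
        {f : MvPolynomial (Fin t) K | ∃ (a : Fin t → ℤ) (z : ℤ) (n : ℕ),
          f = binomPoly ((∑ i : Fin t, a i • MvPolynomial.X i)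
                - MvPolynomial.C (z : K)) n} :
      Set (MvPolynomial (Fin t) K)) =
    {f | ∀ z : Fin t → ℤ, ∃ m : ℤ,
      MvPolynomial.eval (fun i => (z i : K)) f = (m : K)} := by
  set A := Algebra.adjoin ℤ
    {f : MvPolynomial (Fin t) K | ∃ (a : Fin t → ℤ) (z : ℤ) (n : ℕ),
      f = binomPoly ((∑ i : Fin t, a i • X i) - C (z : K)) n}
  suffices h : A = integerValued K (Fin t) by
    ext f
    rw [h, SetLike.mem_coe, mem_integerValued]
    rfl
  refine le_antisymm (Algebra.adjoin_le ?_) fun f hf => ?_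
  · rintro _ ⟨a, c, n, rfl⟩
    exact binomPoly_linear_mem_integerValued a c n
  · refine (Submodule.span_le (p := Subalgebra.toSubmodule A)).mpr ?_
      (mem_span_multiBinom_of_mem_integerValued hf)
    rintro _ ⟨ν, rfl⟩
    exact Subalgebra.prod_mem _ fun i _ =>
      Algebra.subset_adjoin ⟨Pi.single i 1, 0, ν i, by simp [Pi.single_apply]⟩

/-- The ℤ-subalgebra of `K[y₁,…,y_t]` generated by all `binom(H − z, n)`, for `H` a
ℤ-linear combination of the variables, `z ∈ ℤ` and `n ∈ ℕ`, coincides with the ring of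
integer-valued polynomials. -/
theorem adjoin_binomials_eq_integer_valued_polynomials
    (K : Type*) [Field K] [CharZero K] (t : ℕ) (ht : 1 ≤ t) :
    (Algebra.adjoin ℤ
        {f : MvPolynomial (Fin t) K | ∃ (a : Fin t → ℤ) (z : ℤ) (n : ℕ),
          f = binomPoly ((∑ i : Fin t, a i • MvPolynomial.X i)
                - MvPolynomial.C (z : K)) n} :
      Set (MvPolynomial (Fin t) K)) =
    {f | ∀ z : Fin t → ℤ, ∃ m : ℤ,
      MvPolynomial.eval (fun i => (z i : K)) f = (m : K)} :=
  adjoin_binomials_eq_integer_valued_polynomials_general K t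
end

section
/- Let A be an associative unital ℚ-algebra and let e, f, h ∈ A satisfy the sl₂-relations h·e − e·h = 2e, h·f − f·h = −2f, e·f − f·e = h. Then for all m, n ∈ ℕ one has e^{(n)} · f^{(m)} = Σ_{k=0}^{min(m,n)} f^{(m−k)} · binom(h − (m+n−2k)·1, k) · e^{(n−k)}. -/
/-- Divided power `a^{(n)} := aⁿ/n!` in a ℚ-algebra. -/
noncomputable def dividedPower {A : Type*} [Ring A] [Algebra ℚ A] (a : A) (n : ℕ) : A :=
  (n.factorial : ℚ)⁻¹ • a ^ n

/-- Binomial coefficient element `binom(a, k) := (1/k!) · ∏_{j=0}^{k-1} (a - j·1)`. -/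
noncomputable def binomElem {A : Type*} [Ring A] [Algebra ℚ A] (a : A) (k : ℕ) : A :=
  (k.factorial : ℚ)⁻¹ • ((List.range k).map (fun (j : ℕ) => a - (j : A))).prod

/-!
Clearing denominators, the formula becomes
`eⁿ fᵐ = ∑ₖ m.descFactorial k * n.choose k • f^(m-k) Pₖ(h - (m+n-2k)) e^(n-k)` with `Pₖ` the
falling factorial, summed over `k ≤ n`; the coefficient vanishes for `k > m`, so no boundary case
is left. This is proved by induction on `n`, multiplying by `e` on the left: `e` passes a
polynomial in `h` by shifting its argument by `-2`, and passes `f^(j+1)` at the cost of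
`(j+1) f^j (h - j)`. The two contributions landing on each index combine by the Pascal-type
identity `C(n,k+1) Pₖ₊₁(x) + C(n,k) (x+n-k+1) Pₖ(x) = C(n+1,k+1) Pₖ₊₁(x+1)`.
-/

open Polynomial Finset

theorem Finset.sum_range_succ_succ_eq_of_pascal {M : Type*} [AddCommMonoid M] {u v w : ℕ → M}
    {n : ℕ} (h0 : w 0 = u 0) (hsucc : ∀ k < n + 1, w (k + 1) = u (k + 1) + v k)
    (hu : u (n + 1) = 0) :
    ∑ k ∈ range (n + 2), w k = ∑ k ∈ range (n + 1), (u k + v k) := by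
  rw [sum_range_succ', sum_congr rfl fun k hk => hsucc k (mem_range.1 hk), sum_add_distrib, h0,
    add_right_comm, ← sum_range_succ' u, sum_range_succ, hu, add_zero, sum_add_distrib]

theorem Polynomial.descPochhammer_succ_comp_X_add_one (R : Type*) [CommRing R] (k : ℕ) :
    (descPochhammer R (k + 1)).comp (X + 1) = (X + 1) * descPochhammer R k := by
  rw [descPochhammer_succ_left, mul_comp, comp_assoc, X_comp, sub_comp, X_comp, one_comp,
    add_sub_cancel_right, comp_X]

theorem Polynomial.choose_smul_descPochhammer_add (R : Type*) [CommRing R] {n k : ℕ}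
    (hk : k ≤ n) :
    n.choose (k + 1) • descPochhammer R (k + 1) +
        n.choose k • ((X + ((n - k + 1 : ℕ) : R[X])) * descPochhammer R k) =
      (n + 1).choose (k + 1) • (descPochhammer R (k + 1)).comp (X + 1) := by
  have hchoose : (n.choose (k + 1) : R[X]) * (k + 1) = n.choose k * (n - k : ℕ) := by
    exact_mod_cast congrArg (Nat.cast : ℕ → R[X]) (Nat.choose_succ_right_eq n k)
  rw [descPochhammer_succ_comp_X_add_one, descPochhammer_succ_right, Nat.choose_succ_succ]
  simp only [nsmul_eq_mul]
  push_cast [hk] at hchoose ⊢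
  linear_combination -descPochhammer R k * hchoose

section Ring

variable {A : Type*} [Ring A]

theorem semiconjBy_sub_of_commute {e h c z : A} (he : h * e - e * h = c * e)
    (hz : Commute e z) : SemiconjBy e (h - z) (h - z - c) := by
  have heh : e * h = h * e - c * e := by rw [← he]; abel
  rw [SemiconjBy, mul_sub, heh, hz.eq]
  noncomm_ring

theorem e_mul_f_pow_succ {e f h : A} (hf : h * f - f * h = -(2 * f)) (hef : e * f - f * e = h)
    (j : ℕ) : e * f ^ (j + 1) = f ^ (j + 1) * e + (j + 1) • (f ^ j * (h - j)) := by
  have hef' : e * f = f * e + h := by rw [← hef]; abel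
  have hf' : h * f = f * h - 2 * f := by rw [sub_eq_iff_eq_add'.1 hf]; abel
  induction j with
  | zero => simpa using hef'
  | succ j ih =>
    have hshift : (h - j) * f = f * (h - j - 2) := by
      rw [sub_mul, hf', (Nat.cast_commute j f).eq]
      noncomm_ring
    calc e * f ^ (j + 1 + 1)
        = f ^ (j + 1) * (e * f) + (j + 1) • (f ^ j * ((h - j) * f)) := by
          rw [pow_succ, ← mul_assoc, ih]
          simp only [add_mul, mul_assoc, smul_mul_assoc]
      _ = (f ^ (j + 1) * f) * e + (f ^ (j + 1) * h + (j + 1) • ((f ^ j * f) * (h - j - 2))) := by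
          rw [hef', hshift]
          simp only [mul_add, mul_assoc, add_assoc]
      _ = f ^ (j + 1 + 1) * e + (j + 1 + 1) • (f ^ (j + 1) * (h - ↑(j + 1))) := by
          rw [← pow_succ, ← pow_succ, add_assoc, ← mul_smul_comm, ← mul_smul_comm, ← mul_add]
          congr 2
          simp only [nsmul_eq_mul, Nat.cast_add, Nat.cast_one]
          noncomm_ring

end Ring

section Algebra

variable {A : Type*} [Ring A] [Algebra ℚ A]

theorem binomElem_eq_smul_aeval_descPochhammer (a : A) (k : ℕ) :
    binomElem a k = (k.factorial : ℚ)⁻¹ • aeval a (descPochhammer ℚ k) := by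
  suffices ((List.range k).map (fun (j : ℕ) => a - (j : A))).prod = aeval a (descPochhammer ℚ k) by
    rw [binomElem, this]
  induction k with
  | zero => simp
  | succ k ih => simp [List.range_succ, descPochhammer_succ_right, ih]

theorem SemiconjBy.aeval_right {e x y : A} (h : SemiconjBy e x y) (p : ℚ[X]) :
    SemiconjBy e (aeval x p) (aeval y p) := by
  induction p using Polynomial.induction_on with
  | C r =>
    simp only [aeval_C]
    exact Algebra.commute_algebraMap_right r e
  | add p q hp hq => simpa only [map_add] using hp.add_right hq
  | monomial n r _ =>
    simp only [map_mul, aeval_C, aeval_X_pow]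
    exact SemiconjBy.mul_right (Algebra.commute_algebraMap_right r e) (h.pow_right (n + 1))

theorem choose_succ_smul_mul_aeval_descPochhammer_mul (F E x : A) {n k : ℕ} (hk : k ≤ n) :
    (n + 1).choose (k + 1) • (F * aeval (x + 1) (descPochhammer ℚ (k + 1)) * E) =
      n.choose (k + 1) • (F * aeval x (descPochhammer ℚ (k + 1)) * E) +
        n.choose k • (F * (x + ↑(n - k + 1)) * aeval x (descPochhammer ℚ k) * E) := by
  have := congrArg (fun p => F * aeval x p * E) (choose_smul_descPochhammer_add ℚ hk)
  simp only [map_add, map_nsmul, map_mul, aeval_comp, aeval_X, map_one, map_natCast,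
    mul_add, add_mul, mul_smul_comm, smul_mul_assoc, mul_assoc] at this ⊢
  exact this.symm

theorem e_mul_f_pow_mul_aeval_mul_e_pow {e f h : A} (he : h * e - e * h = 2 * e)
    (hf : h * f - f * h = -(2 * f)) (hef : e * f - f * e = h) (i r : ℕ) (z : ℤ) (p : ℚ[X]) :
    e * (f ^ i * aeval (h - z) p * e ^ r) =
      f ^ i * aeval (h - z - 2) p * e ^ (r + 1) +
        i • (f ^ (i - 1) * (h - ↑(i - 1)) * aeval (h - z) p * e ^ r) := by
  have hshift : e * aeval (h - z) p = aeval (h - z - 2) p * e :=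
    ((semiconjBy_sub_of_commute he (Int.cast_commute z e).symm).aeval_right p).eq
  rcases i with _ | i
  · simp [← mul_assoc, hshift, pow_succ']
  · rw [← mul_assoc, ← mul_assoc, e_mul_f_pow_succ hf hef]
    simp only [add_mul, mul_assoc, hshift, pow_succ', smul_mul_assoc, add_tsub_cancel_right]

theorem pow_mul_pow_eq_sum_descFactorial_mul_choose {e f h : A} (he : h * e - e * h = 2 * e)
    (hf : h * f - f * h = -(2 * f)) (hef : e * f - f * e = h) (m n : ℕ) :
    e ^ n * f ^ m = ∑ k ∈ range (n + 1), (m.descFactorial k * n.choose k) •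
      (f ^ (m - k) * aeval (h - ((m + n - 2 * k : ℤ) : A)) (descPochhammer ℚ k) * e ^ (n - k)) := by
  induction n with
  | zero => simp
  | succ n ih =>
    calc e ^ (n + 1) * f ^ m = e * (e ^ n * f ^ m) := by rw [pow_succ', mul_assoc]
      _ = ∑ k ∈ range (n + 1),
            ((m.descFactorial k * n.choose k) • (f ^ (m - k) *
              aeval (h - ((m + n - 2 * k : ℤ) : A) - 2) (descPochhammer ℚ k) * e ^ (n + 1 - k)) +
            (m.descFactorial k * n.choose k) • (m - k) • (f ^ (m - k - 1) * (h - ↑(m - k - 1)) *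
              aeval (h - ((m + n - 2 * k : ℤ) : A)) (descPochhammer ℚ k) * e ^ (n - k))) := by
        rw [ih, mul_sum]
        refine sum_congr rfl fun k hk => ?_
        rw [mul_smul_comm, e_mul_f_pow_mul_aeval_mul_e_pow he hf hef, smul_add,
          Nat.sub_add_comm (mem_range_succ_iff.1 hk)]
      _ = _ := by
        refine (sum_range_succ_succ_eq_of_pascal (by simp) (fun k hk => ?_) (by simp)).symm
        rcases lt_or_ge k m with hkm | hmk
        · set x := h - ((m + n - 2 * k : ℤ) : A) with hx
          have hx1 : h - (((m + (n + 1 : ℕ) - 2 * (k + 1 : ℕ) : ℤ)) : A) = x + 1 := by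
            rw [show (m + (n + 1 : ℕ) - 2 * (k + 1 : ℕ) : ℤ) = m + n - 2 * k - 1 by push_cast; ring,
              Int.cast_sub, Int.cast_one, hx]
            abel
          have hx2 : h - (((m + n - 2 * (k + 1 : ℕ) : ℤ)) : A) - 2 = x := by
            rw [show (m + n - 2 * (k + 1 : ℕ) : ℤ) = m + n - 2 * k - 2 by push_cast; ring,
              Int.cast_sub, Int.cast_ofNat, hx]
            abel
          have hx3 : h - ((m - k - 1 : ℕ) : A) = x + ((n - k + 1 : ℕ) : A) := by
            have : ((m - k - 1 : ℕ) : ℤ) = (m + n - 2 * k : ℤ) - ((n - k + 1 : ℕ) : ℤ) := by omega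
            rw [← Int.cast_natCast (m - k - 1), this, Int.cast_sub, Int.cast_natCast, hx]
            abel
          rw [hx1, hx2, hx3, Nat.add_sub_add_right, Nat.sub_sub, smul_smul, mul_right_comm,
            mul_comm (m.descFactorial k), ← Nat.descFactorial_succ, mul_smul, mul_smul, mul_smul,
            ← smul_add, choose_succ_smul_mul_aeval_descPochhammer_mul _ _ _ (Nat.le_of_lt_succ hk)]
        · simp [Nat.sub_eq_zero_of_le hmk]

theorem dividedPower_mul_binomElem_mul_dividedPower (e f x : A) {m n k : ℕ} (hkm : k ≤ m)
    (hkn : k ≤ n) :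
    dividedPower f (m - k) * binomElem x k * dividedPower e (n - k) =
      ((n.factorial : ℚ)⁻¹ * (m.factorial : ℚ)⁻¹) • (m.descFactorial k * n.choose k) •
        (f ^ (m - k) * aeval x (descPochhammer ℚ k) * e ^ (n - k)) := by
  have hdesc : (m.descFactorial k : ℚ) = m.factorial / (m - k).factorial := by
    rw [eq_div_iff (by positivity), mul_comm]
    exact_mod_cast Nat.factorial_mul_descFactorial hkm
  simp only [dividedPower, binomElem_eq_smul_aeval_descPochhammer, smul_mul_assoc, mul_smul_comm,
    smul_smul, ← Nat.cast_smul_eq_nsmul ℚ]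
  congr 1
  push_cast
  rw [hdesc, Nat.cast_choose ℚ hkn]
  field_simp

end Algebra

/-- Kostant's commutation formula for an sl₂-triple `(e, f, h)`:
`e^{(n)} f^{(m)} = Σ_{k=0}^{min(m,n)} f^{(m-k)} binom(h - (m+n-2k)·1, k) e^{(n-k)}`. -/
theorem dividedPower_sl2_commutation
    (A : Type*) [Ring A] [Algebra ℚ A] (e f h : A)
    (he : h * e - e * h = 2 * e) (hf : h * f - f * h = -(2 * f))
    (hef : e * f - f * e = h) (m n : ℕ) :
    dividedPower e n * dividedPower f m =
      ∑ k ∈ Finset.range (min m n + 1),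
        dividedPower f (m - k) *
          binomElem (h - ((m + n - 2 * k : ℕ) : A)) k *
          dividedPower e (n - k) := by
  calc dividedPower e n * dividedPower f m
      = ((n.factorial : ℚ)⁻¹ * (m.factorial : ℚ)⁻¹) • (e ^ n * f ^ m) := by
        rw [dividedPower, dividedPower, smul_mul_smul_comm]
    _ = ∑ k ∈ range (min m n + 1), ((n.factorial : ℚ)⁻¹ * (m.factorial : ℚ)⁻¹) •
          (m.descFactorial k * n.choose k) • (f ^ (m - k) *
            aeval (h - ((m + n - 2 * k : ℤ) : A)) (descPochhammer ℚ k) * e ^ (n - k)) := by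
        rw [pow_mul_pow_eq_sum_descFactorial_mul_choose he hf hef, smul_sum]
        refine (sum_subset (range_subset_range.2 (by omega)) fun k hk hk' => ?_).symm
        rw [Nat.descFactorial_eq_zero_iff_lt.2 (by simp at hk hk'; omega)]
        simp
    _ = _ := by
        refine sum_congr rfl fun k hk => ?_
        have hk : k ≤ m ∧ k ≤ n := by simp at hk; omega
        have hpoint : ((m + n - 2 * k : ℕ) : A) = ((m + n - 2 * k : ℤ) : A) := by
          rw [← Int.cast_natCast, Nat.cast_sub (by omega)]
          push_cast
          rfl
        rw [hpoint, dividedPower_mul_binomElem_mul_dividedPower e f _ hk.1 hk.2]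
end

section
/- Let A be an associative unital ℚ-algebra, let r ∈ ℕ, let ε₁, ε₂, … be signs (each εₛ ∈ {+1, −1}), and let x ∈ A and y₀, y₁, y₂, … ∈ A satisfy x·y_{s−1} − y_{s−1}·x = εₛ·(r+s)·yₛ for all s ≥ 1. Then for every n ∈ ℕ one has x^{(n)} · y₀ = Σ_{k=0}^{n} (∏_{s=1}^{k} εₛ) · C(r+k, k) · y_k · x^{(n−k)}, where C(r+k, k) is the ordinary (integer) binomial coefficient. -/
/-!
Put `z_k = (∏_{s ≤ k} εₛ) C(r+k, k) y_k`. Since `(k+1) C(r+k+1, k+1) = (r+k+1) C(r+k, k)`, the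
hypothesis becomes `x z_k = z_k x + (k+1) z_{k+1}`. For any such sequence
`x^{(n)} z_0 = Σ_{i+j=n} z_i x^{(j)}` by induction on `n`: multiply by `x`, use
`x x^{(j)} = (j+1) x^{(j+1)}`, and the two resulting sums recombine with weight `i + j = n + 1`.
-/

open Finset

section DividedPower

variable {A : Type*} [Ring A] [Algebra ℚ A]

@[simp]
lemma dividedPower_zero (a : A) : dividedPower a 0 = 1 := by
  simp [dividedPower]

lemma mul_dividedPower (a : A) (m : ℕ) :
    a * dividedPower a m = (m + 1) • dividedPower a (m + 1) := by
  have hm : (m.factorial : ℚ) ≠ 0 := by exact_mod_cast m.factorial_ne_zero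
  rw [← Nat.cast_smul_eq_nsmul ℚ]
  simp only [dividedPower, Nat.factorial_succ, pow_succ', mul_smul_comm, smul_smul]
  congr 1
  push_cast
  field_simp

lemma eq_of_nsmul_eq_nsmul {n : ℕ} (hn : n ≠ 0) {a b : A} (h : n • a = n • b) :
    a = b := by
  rw [← Nat.cast_smul_eq_nsmul ℚ, ← Nat.cast_smul_eq_nsmul ℚ] at h
  exact smul_right_injective A (Nat.cast_ne_zero.mpr hn) h

theorem dividedPower_mul_eq_sum_antidiagonal {x : A} {z : ℕ → A}
    (hz : ∀ k, x * z k = z k * x + (k + 1) • z (k + 1)) (n : ℕ) :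
    dividedPower x n * z 0 = ∑ p ∈ antidiagonal n, z p.1 * dividedPower x p.2 := by
  induction n with
  | zero => simp
  | succ n ih =>
    refine eq_of_nsmul_eq_nsmul n.succ_ne_zero ?_
    calc (n + 1) • (dividedPower x (n + 1) * z 0)
        = ∑ p ∈ antidiagonal n, x * (z p.1 * dividedPower x p.2) := by
          rw [← mul_sum, ← ih, ← mul_assoc, mul_dividedPower, smul_mul_assoc]
      _ = ∑ p ∈ antidiagonal n, ((p.2 + 1) • (z p.1 * dividedPower x (p.2 + 1)) +
            (p.1 + 1) • (z (p.1 + 1) * dividedPower x p.2)) := by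
          refine sum_congr rfl fun p _ => ?_
          rw [← mul_assoc, hz, add_mul, mul_assoc, mul_dividedPower, smul_mul_assoc,
            mul_smul_comm]
      _ = ∑ p ∈ antidiagonal (n + 1), p.2 • (z p.1 * dividedPower x p.2) +
            ∑ p ∈ antidiagonal (n + 1), p.1 • (z p.1 * dividedPower x p.2) := by
          rw [Nat.sum_antidiagonal_succ', Nat.sum_antidiagonal_succ, sum_add_distrib]
          simp
      _ = (n + 1) • ∑ p ∈ antidiagonal (n + 1), z p.1 * dividedPower x p.2 := by
          rw [← sum_add_distrib, smul_sum]
          refine sum_congr rfl fun p hp => ?_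
          rw [← add_smul, add_comm, mem_antidiagonal.mp hp]

end DividedPower

lemma add_one_mul_prod_mul_choose_eq (r : ℕ) (ε : ℕ → ℤ) (k : ℕ) :
    ((k + 1 : ℕ) : ℤ) * ((∏ s ∈ Icc 1 (k + 1), ε s) * ((r + (k + 1)).choose (k + 1) : ℤ)) =
      (ε (k + 1) * ((r : ℤ) + (k + 1 : ℕ))) *
        ((∏ s ∈ Icc 1 k, ε s) * ((r + k).choose k : ℤ)) := by
  have hchoose : ((r + k + 1).choose (k + 1) : ℤ) * (k + 1) = (r + k + 1) * (r + k).choose k := by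
    exact_mod_cast (Nat.add_one_mul_choose_eq (r + k) k).symm
  rw [prod_Icc_succ_top (by omega), ← add_assoc]
  push_cast
  linear_combination (∏ s ∈ Icc 1 k, ε s) * ε (k + 1) * hchoose

theorem dividedPower_mul_oddRootVector_general
    (A : Type*) [Ring A] [Algebra ℚ A] (r : ℕ) (ε : ℕ → ℤ)
    (x : A) (y : ℕ → A)
    (hrel : ∀ s : ℕ, 1 ≤ s →
      x * y (s - 1) - y (s - 1) * x = (ε s * ((r : ℤ) + (s : ℤ))) • y s)
    (n : ℕ) :
    dividedPower x n * y 0 =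
      ∑ k ∈ Finset.range (n + 1),
        ((∏ s ∈ Finset.Icc 1 k, ε s) * ((r + k).choose k : ℤ)) •
          (y k * dividedPower x (n - k)) := by
  set c : ℕ → ℤ := fun k => (∏ s ∈ Icc 1 k, ε s) * ((r + k).choose k : ℤ)
  have hz (k : ℕ) : x * (c k • y k) = c k • y k * x + (k + 1) • (c (k + 1) • y (k + 1)) := by
    have hk := sub_eq_iff_eq_add'.mp (hrel (k + 1) (Nat.le_add_left 1 k))
    rw [Nat.add_sub_cancel] at hk
    have hck : c k * (ε (k + 1) * ((r : ℤ) + (k + 1 : ℕ))) = ((k + 1 : ℕ) : ℤ) * c (k + 1) :=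
      (mul_comm _ _).trans (add_one_mul_prod_mul_choose_eq r ε k).symm
    rw [mul_smul_comm, hk, smul_add, smul_mul_assoc, smul_smul, hck,
      mul_smul ((k + 1 : ℕ) : ℤ), natCast_zsmul]
  have hc₀ : c 0 = 1 := by simp [c]
  have h := dividedPower_mul_eq_sum_antidiagonal hz n
  simpa only [hc₀, one_smul, Nat.sum_antidiagonal_eq_sum_range_succ_mk, smul_mul_assoc] using h

/-- If `x·y_{s−1} − y_{s−1}·x = εₛ·(r+s)·yₛ` for all `s ≥ 1`, with each `εₛ = ±1`, then
`x^{(n)} · y₀ = Σ_{k=0}^{n} (∏_{s=1}^{k} εₛ) · C(r+k, k) · y_k · x^{(n−k)}`. -/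
theorem dividedPower_mul_oddRootVector
    (A : Type*) [Ring A] [Algebra ℚ A] (r : ℕ) (ε : ℕ → ℤ)
    (hε : ∀ s : ℕ, ε s = 1 ∨ ε s = -1) (x : A) (y : ℕ → A)
    (hrel : ∀ s : ℕ, 1 ≤ s →
      x * y (s - 1) - y (s - 1) * x = (ε s * ((r : ℤ) + (s : ℤ))) • y s)
    (n : ℕ) :
    dividedPower x n * y 0 =
      ∑ k ∈ Finset.range (n + 1),
        ((∏ s ∈ Finset.Icc 1 k, ε s) * ((r + k).choose k : ℤ)) •
          (y k * dividedPower x (n - k)) :=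
  dividedPower_mul_oddRootVector_general A r ε x y hrel n
end

section
/- Let A be an associative unital ℚ-algebra, let w ∈ A be nilpotent, and let a, b, c, t, t' ∈ A be such that: t, t' and c commute with each other and with each of w, a, b; a and b commute with w; a·b = −c·w; c·a = 0 = c·b; and c² = 0. Then t·w, t'·w and (t + t' − c)·w are nilpotent, and exp(t·w) · (1+a) · exp(t'·w) · (1+b) = exp((t + t' − c)·w) · (1 + a + b). -/
/-- The exponential `exp(x) = Σ_{k<m} xᵏ/k!` of a nilpotent element `x` (with `xᵐ = 0`),
in a ℚ-algebra: a finite sum. -/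
noncomputable def nilpotentExp {A : Type*} [Ring A] [Algebra ℚ A] (x : A) (m : ℕ) : A :=
  ∑ k ∈ Finset.range m, (k.factorial : ℚ)⁻¹ • x ^ k

/-!
With `z = -(c·w)`, the hypotheses say exactly that `a·b = z`, that `z` kills `a` and `b` from
the left and that `z² = 0`, so `(1+a)(1+b) = (1+z)(1+a+b) = exp(z)(1+a+b)`. Moving `1+a` past
`exp(t'·w)` and multiplying the three pairwise commuting exponentials
`exp(t·w)·exp(t'·w)·exp(z) = exp((t+t'-c)·w)` gives the rule.
-/

namespace IsNilpotent

variable {A : Type*} [Ring A] [Module ℚ A]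

theorem commute_exp_left {x y : A} (h : Commute x y) : Commute (exp x) y :=
  Commute.sum_left _ _ _ fun k _ => (h.pow_left k).smul_left _

theorem exp_eq_one_add_of_sq_eq_zero {x : A} (h : x ^ 2 = 0) : exp x = 1 + x := by
  simp [exp_eq_sum h, Finset.sum_range_succ]

end IsNilpotent

open IsNilpotent

theorem nilpotentExp_eq_exp {A : Type*} [Ring A] [Algebra ℚ A] {x : A} {m : ℕ}
    (h : x ^ m = 0) : nilpotentExp x m = exp x :=
  (exp_eq_sum h).symm

theorem Commute.mul_right_mul_right {S : Type*} [Semigroup S] {x y w : S} (hxy : Commute x y)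
    (hxw : Commute x w) (hyw : Commute y w) : Commute (x * w) (y * w) :=
  (hxy.mul_right hxw).mul_left (hyw.symm.mul_right (Commute.refl w))

theorem one_add_mul_one_add_of_mul_eq {R : Type*} [Ring R] {a b z : R} (hab : a * b = z)
    (hza : z * a = 0) (hzb : z * b = 0) : (1 + a) * (1 + b) = (1 + z) * (1 + a + b) :=
  calc (1 + a) * (1 + b) = 1 + a + b + a * b := by noncomm_ring
    _ = 1 + a + b + z + z * a + z * b := by rw [hab, hza, hzb, add_zero, add_zero]
    _ = (1 + z) * (1 + a + b) := by noncomm_ring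

theorem exp_one_add_mul_exp_one_add_general
    (A : Type*) [Ring A] [Algebra ℚ A] (w a b c t t' : A)
    (hw : IsNilpotent w)
    (htt' : Commute t t') (htc : Commute t c) (ht'c : Commute t' c)
    (htw : Commute t w)
    (ht'w : Commute t' w) (ht'a : Commute t' a)
    (hcw : Commute c w)
    (haw : Commute a w) (hbw : Commute b w)
    (hab : a * b = -(c * w)) (hca : c * a = 0) (hcb : c * b = 0)
    (hc2 : c ^ 2 = 0) :
    IsNilpotent (t * w) ∧ IsNilpotent (t' * w) ∧ IsNilpotent ((t + t' - c) * w) ∧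
    ∀ m : ℕ, (t * w) ^ m = 0 → (t' * w) ^ m = 0 → ((t + t' - c) * w) ^ m = 0 →
      nilpotentExp (t * w) m * (1 + a) * nilpotentExp (t' * w) m * (1 + b) =
        nilpotentExp ((t + t' - c) * w) m * (1 + a + b) := by
  have htw_nil := htw.isNilpotent_mul_left hw
  have ht'w_nil := ht'w.isNilpotent_mul_left hw
  have hcw_nil := hcw.isNilpotent_mul_left hw
  refine ⟨htw_nil, ht'w_nil, ((htw.add_left ht'w).sub_left hcw).isNilpotent_mul_left hw,
    fun m h₁ h₂ h₃ => ?_⟩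
  rw [nilpotentExp_eq_exp h₁, nilpotentExp_eq_exp h₂, nilpotentExp_eq_exp h₃]
  have htt'w := htt'.mul_right_mul_right htw ht'w
  have hcwa : -(c * w) * a = 0 := by
    rw [neg_mul, mul_assoc, ← haw.eq, ← mul_assoc, hca, zero_mul, neg_zero]
  have hcwb : -(c * w) * b = 0 := by
    rw [neg_mul, mul_assoc, ← hbw.eq, ← mul_assoc, hcb, zero_mul, neg_zero]
  have hsq : (-(c * w)) ^ 2 = 0 := by rw [neg_sq, hcw.mul_pow, hc2, zero_mul]
  calc exp (t * w) * (1 + a) * exp (t' * w) * (1 + b)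
      = exp (t * w) * exp (t' * w) * ((1 + a) * (1 + b)) := by
        have hexp : Commute (exp (t' * w)) (1 + a) :=
          (Commute.one_right _).add_right (commute_exp_left (ht'a.mul_left haw.symm))
        rw [mul_assoc (exp (t * w)) (1 + a), ← hexp.eq]
        noncomm_ring
    _ = exp (t * w + t' * w) * exp (-(c * w)) * (1 + a + b) := by
        rw [one_add_mul_one_add_of_mul_eq hab hcwa hcwb, exp_eq_one_add_of_sq_eq_zero hsq,
          exp_add_of_commute htt'w htw_nil ht'w_nil]
        noncomm_ring
    _ = exp ((t + t' - c) * w) * (1 + a + b) := by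
        rw [← exp_add_of_commute ((htc.mul_right_mul_right htw hcw).add_left
          (ht'c.mul_right_mul_right ht'w hcw)).neg_right
          (htt'w.isNilpotent_add htw_nil ht'w_nil) hcw_nil.neg]
        congr 2; noncomm_ring

/-- The multiplication rule
`exp(t·w)·(1+a)·exp(t'·w)·(1+b) = exp((t+t'−c)·w)·(1+a+b)` for one-parameter
supersubgroups attached to an odd root vector with nonzero square. -/
theorem exp_one_add_mul_exp_one_add
    (A : Type*) [Ring A] [Algebra ℚ A] (w a b c t t' : A)
    (hw : IsNilpotent w)
    (htt' : Commute t t') (htc : Commute t c) (ht'c : Commute t' c)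
    (htw : Commute t w) (hta : Commute t a) (htb : Commute t b)
    (ht'w : Commute t' w) (ht'a : Commute t' a) (ht'b : Commute t' b)
    (hcw : Commute c w) (hca' : Commute c a) (hcb' : Commute c b)
    (haw : Commute a w) (hbw : Commute b w)
    (hab : a * b = -(c * w)) (hca : c * a = 0) (hcb : c * b = 0)
    (hc2 : c ^ 2 = 0) :
    IsNilpotent (t * w) ∧ IsNilpotent (t' * w) ∧ IsNilpotent ((t + t' - c) * w) ∧
    ∀ m : ℕ, (t * w) ^ m = 0 → (t' * w) ^ m = 0 → ((t + t' - c) * w) ^ m = 0 →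
      nilpotentExp (t * w) m * (1 + a) * nilpotentExp (t' * w) m * (1 + b) =
        nilpotentExp ((t + t' - c) * w) m * (1 + a + b) :=
  exp_one_add_mul_exp_one_add_general A w a b c t t' hw htt' htc ht'c htw ht'w ht'a hcw haw hbw hab
    hca hcb hc2
end
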